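/- Define a translation [·] from ATL* formulas to HyperATL*_S formulas using one fixed path variable π̇: [a] := a_{π̇} for atomic propositions a; [·] commutes with ¬, ∧, X and U; a state formula φ occurring in path position is translated to [φ]_{π̇}; [⟪A⟫ψ] := ⟪A⟫_∅ π̇. [ψ] and [⟦A⟧ψ] := ⟦A⟧_∅ π̇. [ψ] (empty sharing constraint). Then for every ATL* state formula φ and every concurrent game structure G: G ⊨_ATL* φ if and only if G ⊨ [φ]. -/
import Mathlib


namespace HyperATLS

attribute [local instance] Classical.propDecidable

set_option linter.unusedVariables false

/-! ### Concurrent game structures, strategies, plays -/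

/-- Nonempty finite sequences over `S`. -/
abbrev NEList (S : Type) : Type := {l : List S // l ≠ []}

/-- A concurrent game structure with agents `Agt`, atomic propositions `AP`,
states `S` and actions `Act`. -/
structure CGS (Agt AP S Act : Type) where
  init : S
  trans : S → (Agt → Act) → S
  label : S → Set AP

/-- A strategy maps nonempty finite sequences of states to actions. -/
abbrev Strategy (S Act : Type) : Type := NEList S → Act

variable {Agt AP S Act Var : Type}

/-- The history `[p 0, …, p k]` of the play from `s` under the strategy vector `F`. -/
def CGS.hist (G : CGS Agt AP S Act) (s : S) (F : Agt → Strategy S Act) : ℕ → NEList S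
  | 0 => ⟨[s], by simp⟩
  | k + 1 =>
    let h := G.hist s F k
    ⟨h.1 ++ [G.trans (h.1.getLast h.2) fun i => F i h], by simp⟩

/-- `Play_G(s, F)`, the `k`-th state of the unique play from `s` under `F`. -/
def CGS.play (G : CGS Agt AP S Act) (s : S) (F : Agt → Strategy S Act) (k : ℕ) : S :=
  (G.hist s F k).1.getLast (G.hist s F k).2

/-- Combine a strategy vector for `A` with one for the complement `Aᶜ`:  `F ⊕ F'`. -/
noncomputable def combine (A : Set Agt) (F : ↥A → Strategy S Act)
    (F' : ↥(Aᶜ) → Strategy S Act) : Agt → Strategy S Act := fun i =>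
  if h : i ∈ A then F ⟨i, h⟩ else F' ⟨i, h⟩

/-- `shr_G(A, ξ)`: strategy vectors for `A` in which agents related by `ξ` share strategies. -/
def shr (A : Set Agt) (ξ : Set (Agt × Agt)) : Set (↥A → Strategy S Act) :=
  {F | ∀ i j : ↥A, ((i : Agt), (j : Agt)) ∈ ξ → F i = F j}

/-! ### HyperATL*_S syntax -/

mutual
/-- HyperATL*_S path formulas. -/
inductive HPath (Agt AP Var : Type) : Type where
  | atom : AP → Var → HPath Agt AP Var
  | conj : HPath Agt AP Var → HPath Agt AP Var → HPath Agt AP Var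
  | neg : HPath Agt AP Var → HPath Agt AP Var
  | next : HPath Agt AP Var → HPath Agt AP Var
  | untl : HPath Agt AP Var → HPath Agt AP Var → HPath Agt AP Var
  | state : HState Agt AP Var → Var → HPath Agt AP Var

/-- HyperATL*_S state formulas. -/
inductive HState (Agt AP Var : Type) : Type where
  | ex : Set Agt → Set (Agt × Agt) → Var → HState Agt AP Var → HState Agt AP Var
  | all : Set Agt → Set (Agt × Agt) → Var → HState Agt AP Var → HState Agt AP Var
  | path : HPath Agt AP Var → HState Agt AP Var
end

/-- Partial path assignments: `Π : V ⇀ S^ω`. -/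
abbrev PathAssign (Var S : Type) : Type := Var → Option (ℕ → S)

/-- `Π[k,∞]`: shift every assigned path by `k`. -/
def shiftPA (Pa : PathAssign Var S) (k : ℕ) : PathAssign Var S :=
  fun v => (Pa v).map fun p n => p (n + k)

/-! ### HyperATL*_S semantics -/

mutual
/-- `Π ⊨_G ψ` for path formulas. -/
def HPath.sat (G : CGS Agt AP S Act) (Pa : PathAssign Var S) :
    HPath Agt AP Var → Prop
  | .atom a π => ∃ p, Pa π = some p ∧ a ∈ G.label (p 0)
  | .conj ψ₁ ψ₂ => HPath.sat G Pa ψ₁ ∧ HPath.sat G Pa ψ₂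
  | .neg ψ => ¬ HPath.sat G Pa ψ
  | .next ψ => HPath.sat G (shiftPA Pa 1) ψ
  | .untl ψ₁ ψ₂ => ∃ k, HPath.sat G (shiftPA Pa k) ψ₂ ∧
      ∀ m, m < k → HPath.sat G (shiftPA Pa m) ψ₁
  | .state φ π => ∃ p, Pa π = some p ∧ HState.sat G (p 0) (fun _ => none) φ

/-- `s, Π ⊨_G φ` for state formulas. -/
def HState.sat (G : CGS Agt AP S Act) (s : S) (Pa : PathAssign Var S) :
    HState Agt AP Var → Prop
  | .ex A ξ π φ => ∃ F : ↥A → Strategy S Act, F ∈ shr A ξ ∧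
      ∀ F' : ↥(Aᶜ) → Strategy S Act, F' ∈ shr (Aᶜ) ξ →
        HState.sat G s (Function.update Pa π (some (G.play s (combine A F F')))) φ
  | .all A ξ π φ => ∀ F : ↥A → Strategy S Act, F ∈ shr A ξ →
      ∃ F' : ↥(Aᶜ) → Strategy S Act, F' ∈ shr (Aᶜ) ξ ∧
        HState.sat G s (Function.update Pa π (some (G.play s (combine A F F')))) φ
  | .path ψ => HPath.sat G Pa ψ
end

/-- `G ⊨ φ`. -/
def CGS.models (G : CGS Agt AP S Act) (φ : HState Agt AP Var) : Prop :=
  HState.sat G G.init (fun _ => none) φ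

/-! ### Closedness, free variables, atomic propositions, substitution -/

mutual
/-- Well-formedness of a path formula w.r.t. a set `B` of bound path variables:
every indexed atom lies under a binding quantifier and nested state formulas are closed. -/
def HPath.wf (B : Set Var) : HPath Agt AP Var → Prop
  | .atom _ π => π ∈ B
  | .conj ψ₁ ψ₂ => HPath.wf B ψ₁ ∧ HPath.wf B ψ₂
  | .neg ψ => HPath.wf B ψ
  | .next ψ => HPath.wf B ψ
  | .untl ψ₁ ψ₂ => HPath.wf B ψ₁ ∧ HPath.wf B ψ₂
  | .state φ π => π ∈ B ∧ HState.wf (∅ : Set Var) φ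

/-- Well-formedness of a state formula w.r.t. a set `B` of bound path variables. -/
def HState.wf (B : Set Var) : HState Agt AP Var → Prop
  | .ex _ _ π φ => HState.wf (insert π B) φ
  | .all _ _ π φ => HState.wf (insert π B) φ
  | .path ψ => HPath.wf B ψ
end

/-- A state formula is closed if all its indexed atoms are bound. -/
def HState.Closed (φ : HState Agt AP Var) : Prop := HState.wf (∅ : Set Var) φ

mutual
/-- Free path variables of a path formula. -/
def HPath.freeP : HPath Agt AP Var → Set Var
  | .atom _ π => {π}
  | .conj ψ₁ ψ₂ => HPath.freeP ψ₁ ∪ HPath.freeP ψ₂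
  | .neg ψ => HPath.freeP ψ
  | .next ψ => HPath.freeP ψ
  | .untl ψ₁ ψ₂ => HPath.freeP ψ₁ ∪ HPath.freeP ψ₂
  | .state φ π => insert π (HState.freeS φ)

/-- Free path variables of a state formula. -/
def HState.freeS : HState Agt AP Var → Set Var
  | .ex _ _ π φ => HState.freeS φ \ {π}
  | .all _ _ π φ => HState.freeS φ \ {π}
  | .path ψ => HPath.freeP ψ
end

mutual
/-- Atomic propositions occurring in a path formula. -/
def HPath.apsP : HPath Agt AP Var → Set AP
  | .atom a _ => {a}
  | .conj ψ₁ ψ₂ => HPath.apsP ψ₁ ∪ HPath.apsP ψ₂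
  | .neg ψ => HPath.apsP ψ
  | .next ψ => HPath.apsP ψ
  | .untl ψ₁ ψ₂ => HPath.apsP ψ₁ ∪ HPath.apsP ψ₂
  | .state φ _ => HState.apsS φ

/-- Atomic propositions occurring in a state formula. -/
def HState.apsS : HState Agt AP Var → Set AP
  | .ex _ _ _ φ => HState.apsS φ
  | .all _ _ _ φ => HState.apsS φ
  | .path ψ => HPath.apsP ψ
end

mutual
/-- Replace every occurrence of the nested state-formula atom `φ'_ρ` by the
indexed atomic proposition `p_ρ`. -/
noncomputable def HPath.substN (φ' : HState Agt AP Var) (p : AP) :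
    HPath Agt AP Var → HPath Agt AP Var
  | .atom a π => .atom a π
  | .conj ψ₁ ψ₂ => .conj (HPath.substN φ' p ψ₁) (HPath.substN φ' p ψ₂)
  | .neg ψ => .neg (HPath.substN φ' p ψ)
  | .next ψ => .next (HPath.substN φ' p ψ)
  | .untl ψ₁ ψ₂ => .untl (HPath.substN φ' p ψ₁) (HPath.substN φ' p ψ₂)
  | .state φ π => if φ = φ' then .atom p π else .state (HState.substN φ' p φ) π

/-- Substitution on state formulas. -/
noncomputable def HState.substN (φ' : HState Agt AP Var) (p : AP) :
    HState Agt AP Var → HState Agt AP Var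
  | .ex A ξ π φ => .ex A ξ π (HState.substN φ' p φ)
  | .all A ξ π φ => .all A ξ π (HState.substN φ' p φ)
  | .path ψ => .path (HPath.substN φ' p ψ)
end

/-- A path formula contains no nested state formulas. -/
def HPath.noState : HPath Agt AP Var → Prop
  | .atom _ _ => True
  | .conj ψ₁ ψ₂ => HPath.noState ψ₁ ∧ HPath.noState ψ₂
  | .neg ψ => HPath.noState ψ
  | .next ψ => HPath.noState ψ
  | .untl ψ₁ ψ₂ => HPath.noState ψ₁ ∧ HPath.noState ψ₂
  | .state _ _ => False

/-- A state formula of the form `⟨A₁⟩_{ξ₁} π₁ … ⟨Aₙ⟩_{ξₙ} πₙ. ψ` where the path formula `ψ`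
contains no nested state formulas. -/
def HState.prefixForm : HState Agt AP Var → Prop
  | .ex _ _ _ φ => HState.prefixForm φ
  | .all _ _ _ φ => HState.prefixForm φ
  | .path ψ => HPath.noState ψ

/-! ### ATL* -/

mutual
/-- ATL* path formulas. -/
inductive APath (Agt AP : Type) : Type where
  | atom : AP → APath Agt AP
  | conj : APath Agt AP → APath Agt AP → APath Agt AP
  | neg : APath Agt AP → APath Agt AP
  | next : APath Agt AP → APath Agt AP
  | untl : APath Agt AP → APath Agt AP → APath Agt AP
  | state : AState Agt AP → APath Agt AP

/-- ATL* state formulas. -/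
inductive AState (Agt AP : Type) : Type where
  | ex : Set Agt → APath Agt AP → AState Agt AP
  | all : Set Agt → APath Agt AP → AState Agt AP
end

mutual
/-- `p ⊨_G ψ` for ATL* path formulas. -/
def APath.sat (G : CGS Agt AP S Act) (p : ℕ → S) : APath Agt AP → Prop
  | .atom a => a ∈ G.label (p 0)
  | .conj ψ₁ ψ₂ => APath.sat G p ψ₁ ∧ APath.sat G p ψ₂
  | .neg ψ => ¬ APath.sat G p ψ
  | .next ψ => APath.sat G (fun n => p (n + 1)) ψ
  | .untl ψ₁ ψ₂ => ∃ k, APath.sat G (fun n => p (n + k)) ψ₂ ∧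
      ∀ m, m < k → APath.sat G (fun n => p (n + m)) ψ₁
  | .state φ => AState.sat G (p 0) φ

/-- `s ⊨_G φ` for ATL* state formulas. -/
def AState.sat (G : CGS Agt AP S Act) (s : S) : AState Agt AP → Prop
  | .ex A ψ => ∃ F : ↥A → Strategy S Act, ∀ F' : ↥(Aᶜ) → Strategy S Act,
      APath.sat G (G.play s (combine A F F')) ψ
  | .all A ψ => ∀ F : ↥A → Strategy S Act, ∃ F' : ↥(Aᶜ) → Strategy S Act,
      APath.sat G (G.play s (combine A F F')) ψ
end

/-- `G ⊨_ATL* φ`. -/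
def CGS.modelsATL (G : CGS Agt AP S Act) (φ : AState Agt AP) : Prop :=
  AState.sat G G.init φ

mutual
/-- The translation `[·]` from ATL* path formulas to HyperATL*_S path formulas,
using the single fixed path variable `()`. -/
def APath.toHyper : APath Agt AP → HPath Agt AP Unit
  | .atom a => .atom a ()
  | .conj ψ₁ ψ₂ => .conj (APath.toHyper ψ₁) (APath.toHyper ψ₂)
  | .neg ψ => .neg (APath.toHyper ψ)
  | .next ψ => .next (APath.toHyper ψ)
  | .untl ψ₁ ψ₂ => .untl (APath.toHyper ψ₁) (APath.toHyper ψ₂)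
  | .state φ => .state (AState.toHyper φ) ()

/-- The translation `[·]` from ATL* state formulas to HyperATL*_S state formulas:
each quantifier binds the fixed path variable `()` with the empty sharing constraint. -/
def AState.toHyper : AState Agt AP → HState Agt AP Unit
  | .ex A ψ => .ex A ∅ () (.path (APath.toHyper ψ))
  | .all A ψ => .all A ∅ () (.path (APath.toHyper ψ))
end
/-! ### Alternating parity automata -/

/-- Positive Boolean formulas over `Q`. -/
inductive PosBool (Q : Type) : Type where
  | var : Q → PosBool Q
  | conj : PosBool Q → PosBool Q → PosBool Q
  | disj : PosBool Q → PosBool Q → PosBool Q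

/-- Satisfaction of a positive Boolean formula by a set of states. -/
def PosBool.Sat {Q : Type} (X : Set Q) : PosBool Q → Prop
  | .var q => q ∈ X
  | .conj θ₁ θ₂ => PosBool.Sat X θ₁ ∧ PosBool.Sat X θ₂
  | .disj θ₁ θ₂ => PosBool.Sat X θ₁ ∨ PosBool.Sat X θ₂

/-- An alternating parity automaton with states `Q` over alphabet `Alph`. -/
structure APA (Q Alph : Type) where
  init : Q
  δ : Q → Alph → PosBool Q
  color : Q → ℕ

/-- The minimal color occurring infinitely often in `col` is even. -/
def ParityAccept (col : ℕ → ℕ) : Prop :=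
  ∃ c, Even c ∧ {k | col k = c}.Infinite ∧ ∀ c', c' < c → {k | col k = c'}.Finite

/-- A run tree of an APA `A` on the word `u`: a set `T ⊆ ℕ*` of nodes containing the
root `ε`, labeled by states such that the root is labeled by the initial state and, for
every node `τ ∈ T`, the set of labels of its children satisfies `δ(ℓ(τ), u(|τ|))`. -/
structure RunTree {Q Alph : Type} (A : APA Q Alph) (u : ℕ → Alph) where
  T : Set (List ℕ)
  label : List ℕ → Q
  root_mem : ([] : List ℕ) ∈ T
  root_label : label [] = A.init
  consistent : ∀ τ ∈ T,
    PosBool.Sat {q | ∃ n : ℕ, τ ++ [n] ∈ T ∧ label (τ ++ [n]) = q}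
      (A.δ (label τ) (u τ.length))

/-- The node at depth `k` along the infinite branch `b`. -/
def branchNode (b : ℕ → ℕ) (k : ℕ) : List ℕ := (List.range k).map b

/-- A run tree is accepting if on every infinite branch the minimal color occurring
infinitely often is even. -/
def RunTree.Accepting {Q Alph : Type} {A : APA Q Alph} {u : ℕ → Alph}
    (rt : RunTree A u) : Prop :=
  ∀ b : ℕ → ℕ, (∀ k, branchNode b k ∈ rt.T) →
    ParityAccept fun k => A.color (rt.label (branchNode b k))

/-- The language of an APA. -/
def APA.Lang {Q Alph : Type} (A : APA Q Alph) : Set (ℕ → Alph) :=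
  {u | ∃ rt : RunTree A u, rt.Accepting}

/-- A deterministic parity automaton. -/
structure DPA (Q Alph : Type) where
  init : Q
  δ : Q → Alph → Q
  color : Q → ℕ

/-- The unique run of a DPA on a word. -/
def DPA.run {Q Alph : Type} (D : DPA Q Alph) (u : ℕ → Alph) : ℕ → Q
  | 0 => D.init
  | k + 1 => D.δ (DPA.run D u k) (u k)

/-- The language of a DPA. -/
def DPA.Lang {Q Alph : Type} (D : DPA Q Alph) : Set (ℕ → Alph) :=
  {u | ParityAccept fun k => D.color (D.run u k)}

/-- A DPA viewed as an APA. -/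
def DPA.toAPA {Q Alph : Type} (D : DPA Q Alph) : APA Q Alph where
  init := D.init
  δ := fun q l => .var (D.δ q l)
  color := D.color

/-! ### Zipping, `(G, sDot)`-equivalence and the product construction -/

/-- `zip(Π)`: zip a path assignment into an infinite word. -/
def zipAssign {V S : Type} (Pa : V → ℕ → S) : ℕ → (V → S) := fun k v => Pa v k

/-- View a total assignment on a set `V` of path variables as a partial path assignment. -/
noncomputable def toAssign (V : Set Var) (Pa : ↥V → ℕ → S) : PathAssign Var S :=
  fun v => if h : v ∈ V then some (Pa ⟨v, h⟩) else none

/-- An automaton over the alphabet `↥V → S` is `(G, sDot)`-equivalent to a HyperATL*_S state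
formula `φ` with free path variables `V` iff for every path assignment `Π : V → S^ω`:
`zip(Π) ∈ L(A)` if and only if `sDot, Π ⊨_G φ`. -/
def APAEquiv {Q : Type} (G : CGS Agt AP S Act) (sDot : S) (V : Set Var)
    (A : APA Q (↥V → S)) (φ : HState Agt AP Var) : Prop :=
  ∀ Pa : ↥V → ℕ → S, zipAssign Pa ∈ A.Lang ↔ HState.sat G sDot (toAssign V Pa) φ

/-- Finitary disjunction (over a finite nonempty index type). -/
noncomputable def PosBool.iOr {ι Q : Type} [Finite ι] [Nonempty ι]
    (f : ι → PosBool Q) : PosBool Q :=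
  letI : Fintype ι := Fintype.ofFinite ι
  (Finset.univ.toList.map f).foldl .disj (f (Classical.arbitrary ι))

/-- Finitary conjunction (over a finite nonempty index type). -/
noncomputable def PosBool.iAnd {ι Q : Type} [Finite ι] [Nonempty ι]
    (f : ι → PosBool Q) : PosBool Q :=
  letI : Fintype ι := Fintype.ofFinite ι
  (Finset.univ.toList.map f).foldl .conj (f (Classical.arbitrary ι))

/-- Action vectors for the agents in `A` respecting the sharing constraint `ξ`. -/
abbrev ShrVec (A : Set Agt) (ξ : Set (Agt × Agt)) (Act : Type) : Type :=
  {a : ↥A → Act // ∀ i j : ↥A, ((i : Agt), (j : Agt)) ∈ ξ → a i = a j}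

instance {A : Set Agt} {ξ : Set (Agt × Agt)} [Nonempty Act] :
    Nonempty (ShrVec A ξ Act) :=
  ⟨⟨fun _ => Classical.arbitrary Act, fun _ _ _ => rfl⟩⟩

/-- Combine an action vector for `A` with one for `Aᶜ`: `a ⊕ a'`. -/
noncomputable def combineVec (A : Set Agt) (a : ↥A → Act) (a' : ↥(Aᶜ) → Act) :
    Agt → Act := fun i =>
  if h : i ∈ A then a ⟨i, h⟩ else a' ⟨i, h⟩

/-- `l[π ↦ s]`: extend a letter `l : V → S` to a letter over `V ∪ {π}`. -/
noncomputable def extendLetter {V : Set Var} (π : Var) (l : ↥V → S) (s : S) :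
    ↥(insert π V) → S := fun v =>
  if h : (v : Var) = π then s
  else l ⟨v, (Set.mem_insert_iff.mp v.2).resolve_left h⟩

/-- The product construction for the existential quantifier `⟪A⟫_ξ π`. -/
noncomputable def productEx {Q : Type} [Finite Agt] [Finite Act] [Nonempty Act]
    (G : CGS Agt AP S Act) (sDot : S) (A : Set Agt) (ξ : Set (Agt × Agt))
    (V : Set Var) (π : Var) (D : DPA Q (↥(insert π V) → S)) :
    APA (Q × S) (↥V → S) where
  init := (D.init, sDot)
  δ := fun qs l =>
    PosBool.iOr fun a : ShrVec A ξ Act =>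
      PosBool.iAnd fun a' : ShrVec (Aᶜ) ξ Act =>
        PosBool.var (D.δ qs.1 (extendLetter π l qs.2),
          G.trans qs.2 (combineVec A a.1 a'.1))
  color := fun qs => D.color qs.1

/-- The product construction for the universal quantifier `⟦A⟧_ξ π`. -/
noncomputable def productAll {Q : Type} [Finite Agt] [Finite Act] [Nonempty Act]
    (G : CGS Agt AP S Act) (sDot : S) (A : Set Agt) (ξ : Set (Agt × Agt))
    (V : Set Var) (π : Var) (D : DPA Q (↥(insert π V) → S)) :
    APA (Q × S) (↥V → S) where
  init := (D.init, sDot)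
  δ := fun qs l =>
    PosBool.iAnd fun a : ShrVec A ξ Act =>
      PosBool.iOr fun a' : ShrVec (Aᶜ) ξ Act =>
        PosBool.var (D.δ qs.1 (extendLetter π l qs.2),
          G.trans qs.2 (combineVec A a.1 a'.1))
  color := fun qs => D.color qs.1
/-! ### Concrete alphabets, automata and the running-example CGS -/

/-- The alphabet `Σ = {a, b, c}`. -/
inductive ABC : Type where
  | a | b | c
deriving DecidableEq

/-- States `{q0, q1, q2, q3}` of the example APA. -/
inductive QABC : Type where
  | q0 | q1 | q2 | q3
deriving DecidableEq

/-- The example APA of Example 3: `δ(q0, l) = q0 ∧ (q1 ∨ q2)` for every letter,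
`q1` waits for an `a`, `q2` waits for a `b`, and `q3` is an accepting sink. -/
def exampleAPA : APA QABC ABC where
  init := .q0
  δ := fun q l =>
    match q, l with
    | .q0, _ => .conj (.var .q0) (.disj (.var .q1) (.var .q2))
    | .q1, .a => .var .q3
    | .q1, _ => .var .q1
    | .q2, .b => .var .q3
    | .q2, _ => .var .q2
    | .q3, _ => .var .q3
  color := fun q =>
    match q with
    | .q0 => 0
    | .q1 => 1
    | .q2 => 1
    | .q3 => 0

/-- States `{q1, q3}` of the sub-automaton `A₁`. -/
inductive QA1 : Type where
  | q1 | q3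
deriving DecidableEq

/-- The APA `A₁`: from `q1` move to the accepting sink `q3` on letter `a`. -/
def exampleAPA1 : APA QA1 ABC where
  init := .q1
  δ := fun q l =>
    match q, l with
    | .q1, .a => .var .q3
    | .q1, _ => .var .q1
    | .q3, _ => .var .q3
  color := fun q =>
    match q with
    | .q1 => 1
    | .q3 => 0

/-- The two path variables `π` and `π'`. -/
inductive PVar : Type where
  | pi | pi'
deriving DecidableEq

/-- The states `{s0, s1, s2}` of the running-example CGS. -/
inductive St : Type where
  | s0 | s1 | s2
deriving DecidableEq

/-- The agents `{sched, W1, W2}` of the running-example CGS. -/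
inductive Ag : Type where
  | sched | w1 | w2
deriving DecidableEq

/-- The actions: `g`/`ng` for the scheduler and `r`/`nr` for the workers. -/
inductive ActEx : Type where
  | g | ng | r | nr
deriving DecidableEq

/-- The running-example CGS: granted requests of both workers lead directly to the
working state `s2`; a granted single request passes through `s1`. -/
def exampleCGS : CGS Ag Unit St ActEx where
  init := .s0
  trans := fun s a =>
    match s with
    | .s0 =>
      if a .sched = .g then
        if a .w1 = .r ∧ a .w2 = .r then .s2
        else if a .w1 = .r ∨ a .w2 = .r then .s1
        else .s0
      else .s0
    | .s1 => .s2
    | .s2 => .s0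
  label := fun s =>
    match s with
    | .s2 => {()}
    | _ => (∅ : Set Unit)

/-- The path formula `(¬ w_{π'}) U (¬ w_{π'} ∧ w_π)`, where `w` is the unique atomic
proposition `()`. -/
def exampleBody : HPath Ag Unit PVar :=
  .untl (.neg (.atom () .pi')) (.conj (.neg (.atom () .pi')) (.atom () .pi))

/-- The state formula `⟦{sched, W1}⟧_∅ π'. (¬ w_{π'}) U (¬ w_{π'} ∧ w_π)`. -/
def exampleInner : HState Ag Unit PVar :=
  .all {Ag.sched, Ag.w1} ∅ .pi' (.path exampleBody)

/-- The state formula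
`⟪{sched, W1, W2}⟫_∅ π. ⟦{sched, W1}⟧_∅ π'. (¬ w_{π'}) U (¬ w_{π'} ∧ w_π)`. -/
def exampleFormula : HState Ag Unit PVar :=
  .ex {Ag.sched, Ag.w1, Ag.w2} ∅ .pi exampleInner

/-- States `{q0, q1, q2}` of the example DPA. -/
inductive QD : Type where
  | q0 | q1 | q2
deriving DecidableEq

/-- The example DPA over the alphabet `{π, π'} → {s0, s1, s2}`. -/
def exampleDPA : DPA QD (PVar → St) where
  init := .q0
  δ := fun q l =>
    match q with
    | .q0 => if l .pi' = .s2 then .q2 else if l .pi = .s2 then .q1 else .q0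
    | .q1 => .q1
    | .q2 => .q2
  color := fun q =>
    match q with
    | .q0 => 1
    | .q1 => 0
    | .q2 => 1
mutual
theorem aux_path {Agt AP S Act : Type} (G : CGS Agt AP S Act) (ψ : APath Agt AP)
    (Pa : PathAssign Unit S) (p : ℕ → S) (h : Pa () = some p) :
    HPath.sat G Pa (APath.toHyper ψ) ↔ APath.sat G p ψ := by
  match ψ with
  | .atom a =>
    simp only [APath.toHyper, HPath.sat, APath.sat, h]
    constructor
    · rintro ⟨q, hq, hm⟩; cases Option.some.inj hq; exact hm
    · intro hm; exact ⟨p, rfl, hm⟩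
  | .conj ψ₁ ψ₂ =>
    simp only [APath.toHyper, HPath.sat, APath.sat]
    exact and_congr (aux_path G ψ₁ Pa p h) (aux_path G ψ₂ Pa p h)
  | .neg ψ =>
    simp only [APath.toHyper, HPath.sat, APath.sat]
    exact not_congr (aux_path G ψ Pa p h)
  | .next ψ =>
    simp only [APath.toHyper, HPath.sat, APath.sat]
    exact aux_path G ψ (shiftPA Pa 1) (fun n => p (n + 1))
      (by simp [shiftPA, h])
  | .untl ψ₁ ψ₂ =>
    simp only [APath.toHyper, HPath.sat, APath.sat]
    constructor
    · rintro ⟨k, h2, h1⟩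
      exact ⟨k, (aux_path G ψ₂ _ _ (by simp [shiftPA, h])).mp h2,
        fun m hm => (aux_path G ψ₁ _ _ (by simp [shiftPA, h])).mp (h1 m hm)⟩
    · rintro ⟨k, h2, h1⟩
      exact ⟨k, (aux_path G ψ₂ _ _ (by simp [shiftPA, h])).mpr h2,
        fun m hm => (aux_path G ψ₁ _ _ (by simp [shiftPA, h])).mpr (h1 m hm)⟩
  | .state φ =>
    simp only [APath.toHyper, HPath.sat, APath.sat]
    constructor
    · rintro ⟨q, hq, hs⟩; cases Option.some.inj (h ▸ hq)
      exact (aux_state G φ (p 0) _).mp hs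
    · intro hs; exact ⟨p, h, (aux_state G φ (p 0) _).mpr hs⟩

theorem aux_state {Agt AP S Act : Type} (G : CGS Agt AP S Act) (φ : AState Agt AP)
    (s : S) (Pa : PathAssign Unit S) :
    HState.sat G s Pa (AState.toHyper φ) ↔ AState.sat G s φ := by
  match φ with
  | .ex A ψ =>
    simp only [AState.toHyper, HState.sat, AState.sat]
    constructor
    · rintro ⟨F, hF, hall⟩
      exact ⟨F, fun F' => (aux_path G ψ _ _ (by simp)).mp
        (hall F' (fun _ _ h => h.elim))⟩
    · rintro ⟨F, hall⟩
      exact ⟨F, fun _ _ h => h.elim, fun F' _ =>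
        (aux_path G ψ _ _ (by simp)).mpr (hall F')⟩
  | .all A ψ =>
    simp only [AState.toHyper, HState.sat, AState.sat]
    constructor
    · rintro hall F
      obtain ⟨F', _, hs⟩ := hall F (fun _ _ h => h.elim)
      exact ⟨F', (aux_path G ψ _ _ (by simp)).mp hs⟩
    · rintro hall F _
      obtain ⟨F', hs⟩ := hall F
      exact ⟨F', fun _ _ h => h.elim, (aux_path G ψ _ _ (by simp)).mpr hs⟩
end

theorem atlStar_embeds_into_hyperATLS
    {Agt AP S Act : Type} (G : CGS Agt AP S Act) (φ : AState Agt AP) :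
    G.modelsATL φ ↔ G.models (AState.toHyper φ) := aux_state G φ G.init (fun _ => none) |>.symm

end HyperATLS
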